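/- Let w solve Lw = w_t + a w_x + b w = f on Ω = (0,L]×(0,T] with w(0,t) = 0, w(x,0) = 0, where a ≥ α > 0, b ≥ 0, and |f(x,t)| ≤ (C₁/ε) e^{(x−L)/ε}. Then |w(x,t)| ≤ C e^{(x−L)/ε} (1 − e^{−‖a‖ t / ε}) for all (x,t) in the closure of Ω, where C depends only on C₁, α, and ‖a‖_∞. -/

import Mathlib

open Set Real Filter Topology


lemma deriv_nonpos_of_min_left {f : ℝ → ℝ} {f' t₀ : ℝ}
    (hd : HasDerivAt f f' t₀)
    (h : ∀ᶠ s in 𝓝[<] t₀, f t₀ ≤ f s) : f' ≤ 0 := by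
  have hT : Tendsto (slope f t₀) (𝓝[<] t₀) (𝓝 f') :=
    (hasDerivAt_iff_tendsto_slope.mp hd).mono_left
      (nhdsWithin_mono _ fun s hs => ne_of_lt hs)
  refine le_of_tendsto hT ?_
  filter_upwards [h, self_mem_nhdsWithin] with s hs hs'
  have hlt : s < t₀ := hs'
  rw [slope_def_field]
  exact div_nonpos_of_nonneg_of_nonpos (by linarith) (by linarith)

lemma min_principle
    (L T α : ℝ) (hL : 0 < L) (hT : 0 < T) (hα : 0 < α)
    (a b φ φx φt : ℝ → ℝ → ℝ)
    (ha : ∀ x ∈ Icc 0 L, ∀ t ∈ Icc 0 T, α ≤ a x t)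
    (hb : ∀ x ∈ Icc 0 L, ∀ t ∈ Icc 0 T, 0 ≤ b x t)
    (hcont : ContinuousOn (fun p : ℝ × ℝ => φ p.1 p.2) (Icc 0 L ×ˢ Icc 0 T))
    (hdx : ∀ x ∈ Ioc 0 L, ∀ t ∈ Ioc 0 T, HasDerivAt (fun s => φ s t) (φx x t) x)
    (hdt : ∀ x ∈ Ioc 0 L, ∀ t ∈ Ioc 0 T, HasDerivAt (fun s => φ x s) (φt x t) t)
    (hpos : ∀ x ∈ Ioc 0 L, ∀ t ∈ Ioc 0 T, 0 < φt x t + a x t * φx x t + b x t * φ x t)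
    (h0 : ∀ t ∈ Icc 0 T, 0 ≤ φ 0 t)
    (hi : ∀ x ∈ Icc 0 L, 0 ≤ φ x 0) :
    ∀ x ∈ Icc 0 L, ∀ t ∈ Icc 0 T, 0 ≤ φ x t := by
  have hKc : IsCompact (Icc (0:ℝ) L ×ˢ Icc (0:ℝ) T) := isCompact_Icc.prod isCompact_Icc
  have hne : (Icc (0:ℝ) L ×ˢ Icc (0:ℝ) T).Nonempty :=
    ⟨(0, 0), ⟨⟨le_rfl, hL.le⟩, ⟨le_rfl, hT.le⟩⟩⟩
  obtain ⟨p₀, hp₀, hmin'⟩ := hKc.exists_isMinOn hne hcont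
  have hmin : ∀ q ∈ Icc (0:ℝ) L ×ˢ Icc (0:ℝ) T, φ p₀.1 p₀.2 ≤ φ q.1 q.2 := fun q hq => hmin' hq
  intro x hx t ht
  by_contra hneg
  push_neg at hneg
  have hm : φ p₀.1 p₀.2 < 0 := lt_of_le_of_lt (hmin (x, t) ⟨hx, ht⟩) hneg
  obtain ⟨⟨hx₀0, hx₀L⟩, ht₀0, ht₀T⟩ := hp₀
  have hx₀ : 0 < p₀.1 := by
    rcases lt_or_eq_of_le hx₀0 with h | h
    · exact h
    · exact absurd hm (not_lt.2 (h ▸ h0 p₀.2 ⟨ht₀0, ht₀T⟩))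
  have ht₀ : 0 < p₀.2 := by
    rcases lt_or_eq_of_le ht₀0 with h | h
    · exact h
    · exact absurd hm (not_lt.2 (h ▸ hi p₀.1 ⟨hx₀0, hx₀L⟩))
  have hxmem : p₀.1 ∈ Ioc 0 L := ⟨hx₀, hx₀L⟩
  have htmem : p₀.2 ∈ Ioc 0 T := ⟨ht₀, ht₀T⟩
  have hφt : φt p₀.1 p₀.2 ≤ 0 := by
    refine deriv_nonpos_of_min_left (hdt p₀.1 hxmem p₀.2 htmem) ?_
    have hIoo : Ioo 0 p₀.2 ∈ 𝓝[<] p₀.2 := Ioo_mem_nhdsLT_of_mem ⟨ht₀, le_rfl⟩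
    filter_upwards [hIoo] with s hs
    exact hmin (p₀.1, s) ⟨⟨hx₀0, hx₀L⟩, ⟨hs.1.le, hs.2.le.trans ht₀T⟩⟩
  have hφx : φx p₀.1 p₀.2 ≤ 0 := by
    refine deriv_nonpos_of_min_left (hdx p₀.1 hxmem p₀.2 htmem) ?_
    have hIoo : Ioo 0 p₀.1 ∈ 𝓝[<] p₀.1 := Ioo_mem_nhdsLT_of_mem ⟨hx₀, le_rfl⟩
    filter_upwards [hIoo] with s hs
    exact hmin (s, p₀.2) ⟨⟨hs.1.le, hs.2.le.trans hx₀L⟩, ⟨ht₀0, ht₀T⟩⟩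
  have hP := hpos p₀.1 hxmem p₀.2 htmem
  have haP : α ≤ a p₀.1 p₀.2 := ha p₀.1 ⟨hx₀0, hx₀L⟩ p₀.2 ⟨ht₀0, ht₀T⟩
  have hbP : 0 ≤ b p₀.1 p₀.2 := hb p₀.1 ⟨hx₀0, hx₀L⟩ p₀.2 ⟨ht₀0, ht₀T⟩
  have h1 : a p₀.1 p₀.2 * φx p₀.1 p₀.2 ≤ 0 :=
    mul_nonpos_of_nonneg_of_nonpos (le_trans hα.le haP) hφx
  have h2 : b p₀.1 p₀.2 * φ p₀.1 p₀.2 ≤ 0 :=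
    mul_nonpos_of_nonneg_of_nonpos hbP hm.le
  linarith

lemma barrier_alg (C₁ α A ε K E u av bv fv : ℝ)
    (hC₁ : 0 < C₁) (hα : 0 < α) (hαA : α ≤ A) (hε : 0 < ε)
    (hKpos : 0 < K) (hKα : K * α = 2 * C₁)
    (hE : 0 < E) (hu0 : 0 < u) (hu1 : u < 1)
    (hav : α ≤ av) (hbv : 0 ≤ bv) (hfv : fv ≤ C₁ / ε * E) :
    0 < K * E * (u * (A / ε)) + av * (K * (E * (1 / ε)) * (1 - u))
        + bv * (K * E * (1 - u)) - fv := by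
  have hne : ε ≠ 0 := hε.ne'
  have h1u : 0 ≤ 1 - u := by linarith
  have hd : α / ε ≤ A / ε := div_le_div_of_nonneg_right hαA hε.le
  have ht1 : K * E * (u * (α / ε)) ≤ K * E * (u * (A / ε)) :=
    mul_le_mul_of_nonneg_left (mul_le_mul_of_nonneg_left hd hu0.le)
      (mul_nonneg hKpos.le hE.le)
  have ht2 : α * (K * (E * (1 / ε)) * (1 - u)) ≤ av * (K * (E * (1 / ε)) * (1 - u)) :=
    mul_le_mul_of_nonneg_right hav
      (mul_nonneg (mul_nonneg hKpos.le (mul_nonneg hE.le (by positivity))) h1u)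
  have ht3 : 0 ≤ bv * (K * E * (1 - u)) :=
    mul_nonneg hbv (mul_nonneg (mul_nonneg hKpos.le hE.le) h1u)
  have hsum : K * E * (u * (α / ε)) + α * (K * (E * (1 / ε)) * (1 - u))
      = K * α * (E * (1 / ε)) := by field_simp; ring
  have hmono : K * α * (E * (1 / ε)) = 2 * (C₁ * (E * (1 / ε))) := by rw [hKα]; ring
  have hm : 0 < C₁ * (E * (1 / ε)) := by
    have h1 : 0 < (1:ℝ)/ε := by positivity
    positivity
  have hfv' : fv ≤ C₁ * (E * (1 / ε)) := by
    have h2 : C₁ / ε * E = C₁ * (E * (1/ε)) := by ring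
    linarith [h2 ▸ hfv]
  linarith

lemma one_side
    (C₁ α A L T ε : ℝ) (hC₁ : 0 < C₁) (hα : 0 < α) (hαA : α ≤ A)
    (hL : 0 < L) (hT : 0 < T) (hε : 0 < ε)
    (a b f w wx wt : ℝ → ℝ → ℝ)
    (hcont : ContinuousOn (fun p : ℝ × ℝ => w p.1 p.2) (Icc 0 L ×ˢ Icc 0 T))
    (ha : ∀ x ∈ Icc 0 L, ∀ t ∈ Icc 0 T, α ≤ a x t)
    (haA : ∀ x ∈ Icc 0 L, ∀ t ∈ Icc 0 T, a x t ≤ A)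
    (hb : ∀ x ∈ Icc 0 L, ∀ t ∈ Icc 0 T, 0 ≤ b x t)
    (hdx : ∀ x ∈ Ioc 0 L, ∀ t ∈ Ioc 0 T, HasDerivAt (fun s => w s t) (wx x t) x)
    (hdt : ∀ x ∈ Ioc 0 L, ∀ t ∈ Ioc 0 T, HasDerivAt (fun s => w x s) (wt x t) t)
    (heq : ∀ x ∈ Ioc 0 L, ∀ t ∈ Ioc 0 T, wt x t + a x t * wx x t + b x t * w x t = f x t)
    (hbc : ∀ t ∈ Icc 0 T, w 0 t = 0)
    (hic : ∀ x ∈ Icc 0 L, w x 0 = 0)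
    (hf : ∀ x ∈ Icc 0 L, ∀ t ∈ Icc 0 T, f x t ≤ (C₁ / ε) * Real.exp ((x - L) / ε)) :
    ∀ x ∈ Icc 0 L, ∀ t ∈ Icc 0 T,
      w x t ≤ (2 * C₁ / α) * Real.exp ((x - L) / ε) * (1 - Real.exp (-(A * t) / ε)) := by
  set K : ℝ := 2 * C₁ / α with hK
  have hKpos : 0 < K := div_pos (by linarith) hα
  have hKα : K * α = 2 * C₁ := by
    rw [hK, div_mul_cancel₀ _ hα.ne']
  set ψ : ℝ → ℝ → ℝ := fun x t => K * Real.exp ((x - L) / ε) * (1 - Real.exp (-(A * t) / ε))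
    with hψ
  set ψx : ℝ → ℝ → ℝ := fun x t =>
    K * (Real.exp ((x - L) / ε) * (1 / ε)) * (1 - Real.exp (-(A * t) / ε)) with hψx
  set ψt : ℝ → ℝ → ℝ := fun x t =>
    K * Real.exp ((x - L) / ε) * (Real.exp (-(A * t) / ε) * (A / ε)) with hψt
  have hdψx : ∀ x t : ℝ, HasDerivAt (fun s => ψ s t) (ψx x t) x := by
    intro x t
    simp only [hψ, hψx]
    have h1 : HasDerivAt (fun s : ℝ => (s - L) / ε) (1 / ε) x := by
      simpa using ((hasDerivAt_id x).sub_const L).div_const ε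
    exact (h1.exp.const_mul K).mul_const _
  have hdψt : ∀ x t : ℝ, HasDerivAt (fun s => ψ x s) (ψt x t) t := by
    intro x t
    simp only [hψ, hψt]
    have h1 : HasDerivAt (fun s : ℝ => -(A * s) / ε) (-(A * 1) / ε) t :=
      (((hasDerivAt_id t).const_mul A).neg).div_const ε
    have h2 := (h1.exp.const_sub 1).const_mul (K * Real.exp ((x - L) / ε))
    refine h2.congr_deriv ?_
    ring
  have key := min_principle L T α hL hT hα a b
      (fun x t => ψ x t - w x t) (fun x t => ψx x t - wx x t) (fun x t => ψt x t - wt x t)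
      ha hb ?_ ?_ ?_ ?_ ?_ ?_
  · intro x hx t ht
    have h := key x hx t ht
    simp only [hψ] at h
    rw [hK] at h
    linarith
  · have hψc : Continuous (fun p : ℝ × ℝ => ψ p.1 p.2) := by
      simp only [hψ]
      exact (continuous_const.mul ((Real.continuous_exp).comp
          (((continuous_fst).sub continuous_const).div_const ε))).mul
        (continuous_const.sub ((Real.continuous_exp).comp
          (((continuous_const.mul continuous_snd).neg).div_const ε)))
    exact hψc.continuousOn.sub hcont
  · exact fun x hx t ht => (hdψx x t).sub (hdx x hx t ht)
  · exact fun x hx t ht => (hdψt x t).sub (hdt x hx t ht)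
  · intro x hx t ht
    have hxI : x ∈ Icc 0 L := ⟨hx.1.le, hx.2⟩
    have htI : t ∈ Icc 0 T := ⟨ht.1.le, ht.2⟩
    have hfb := hf x hxI t htI
    have haP := ha x hxI t htI
    have hbP := hb x hxI t htI
    have heqx := heq x hx t ht
    have hu1 : Real.exp (-(A * t) / ε) < 1 := by
      apply Real.exp_lt_one_iff.mpr
      have : 0 < A * t := mul_pos (lt_of_lt_of_le hα hαA) ht.1
      exact div_neg_of_neg_of_pos (by linarith) hε
    have hexpand : ψt x t - wt x t + a x t * (ψx x t - wx x t) + b x t * (ψ x t - w x t)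
        = K * Real.exp ((x - L) / ε) * (Real.exp (-(A * t) / ε) * (A / ε))
          + a x t * (K * (Real.exp ((x - L) / ε) * (1 / ε)) * (1 - Real.exp (-(A * t) / ε)))
          + b x t * (K * Real.exp ((x - L) / ε) * (1 - Real.exp (-(A * t) / ε))) - f x t := by
      simp only [hψ, hψx, hψt]
      rw [← heqx]; ring
    show 0 < ψt x t - wt x t + a x t * (ψx x t - wx x t) + b x t * (ψ x t - w x t)
    rw [hexpand]
    exact barrier_alg C₁ α A ε K _ _ (a x t) (b x t) (f x t) hC₁ hα hαA hε hKpos hKα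
      (Real.exp_pos _) (Real.exp_pos _) hu1 haP hbP hfb
  · intro t ht
    show 0 ≤ ψ 0 t - w 0 t
    rw [hbc t ht]
    simp only [hψ, sub_zero]
    have h1 : Real.exp (-(A * t) / ε) ≤ 1 := by
      apply Real.exp_le_one_iff.mpr
      apply div_nonpos_of_nonpos_of_nonneg _ hε.le
      have : 0 ≤ A * t := mul_nonneg (le_trans hα.le hαA) ht.1
      linarith
    exact mul_nonneg (mul_nonneg hKpos.le (Real.exp_pos _).le) (by linarith)
  · intro x hx
    show 0 ≤ ψ x 0 - w x 0
    rw [hic x hx]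
    simp [hψ]


/-- Layer bound: the solution of `Lw = f` with zero initial/boundary data and
`|f| ≤ (C₁/ε) e^{(x-L)/ε}` satisfies
`|w(x,t)| ≤ C e^{(x-L)/ε}(1 - e^{-‖a‖t/ε})` with `C = C(C₁, α, ‖a‖)`. -/
theorem stmt_4
    (C₁ α A : ℝ) (hC₁ : 0 < C₁) (hα : 0 < α) (hαA : α ≤ A) :
    ∃ C > 0, ∀ (L T ε : ℝ) (a b f w wx wt : ℝ → ℝ → ℝ),
      0 < L → 0 < T → 0 < ε → ε ≤ 1 →
      ContinuousOn (fun p : ℝ × ℝ => w p.1 p.2) (Icc 0 L ×ˢ Icc 0 T) →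
      (∀ x ∈ Icc 0 L, ∀ t ∈ Icc 0 T, α ≤ a x t) →
      (∀ x ∈ Icc 0 L, ∀ t ∈ Icc 0 T, a x t ≤ A) →
      (∀ x ∈ Icc 0 L, ∀ t ∈ Icc 0 T, 0 ≤ b x t) →
      (∀ x ∈ Ioc 0 L, ∀ t ∈ Ioc 0 T,
        HasDerivAt (fun s => w s t) (wx x t) x) →
      (∀ x ∈ Ioc 0 L, ∀ t ∈ Ioc 0 T,
        HasDerivAt (fun s => w x s) (wt x t) t) →
      (∀ x ∈ Ioc 0 L, ∀ t ∈ Ioc 0 T,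
        wt x t + a x t * wx x t + b x t * w x t = f x t) →
      (∀ t ∈ Icc 0 T, w 0 t = 0) →
      (∀ x ∈ Icc 0 L, w x 0 = 0) →
      (∀ x ∈ Icc 0 L, ∀ t ∈ Icc 0 T,
        |f x t| ≤ (C₁ / ε) * Real.exp ((x - L) / ε)) →
      ∀ x ∈ Icc 0 L, ∀ t ∈ Icc 0 T,
        |w x t| ≤ C * Real.exp ((x - L) / ε) * (1 - Real.exp (-(A * t) / ε)) := by

  refine ⟨2 * C₁ / α, div_pos (by linarith) hα, ?_⟩
  intro L T ε a b f w wx wt hL hT hε hε1 hcont ha haA hb hdx hdt heq hbc hic hf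
  have hP1 := one_side C₁ α A L T ε hC₁ hα hαA hL hT hε a b f w wx wt hcont ha haA hb hdx hdt heq
    hbc hic (fun x hx t ht => le_trans (le_abs_self _) (hf x hx t ht))
  have hN1 := one_side C₁ α A L T ε hC₁ hα hαA hL hT hε a b (fun x t => -f x t)
    (fun x t => -w x t) (fun x t => -wx x t) (fun x t => -wt x t) hcont.neg ha haA hb
    (fun x hx t ht => (hdx x hx t ht).neg)
    (fun x hx t ht => (hdt x hx t ht).neg)
    (fun x hx t ht => by linear_combination -heq x hx t ht)
    (fun t ht => by simp [hbc t ht])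
    (fun x hx => by simp [hic x hx])
    (fun x hx t ht => le_trans (neg_le_abs _) (hf x hx t ht))
  intro x hx t ht
  have p := hP1 x hx t ht
  have n := hN1 x hx t ht
  rw [abs_le]
  exact ⟨by linarith, p⟩
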